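/- Composition lemma for unordered trees: for every m ∈ ℕ, if t₁, t₂, s₁, s₂ are nonempty finite unordered Σ-labeled trees, aᵢ is a node of tᵢ (i = 1,2), (t₁, a₁) ≡_m (t₂, a₂) and s₁ ≡_m s₂ with respect to first-order sentences of quantifier rank at most m, then ((t₁ ·_{a₁} s₁), a₁) ≡_m ((t₂ ·_{a₂} s₂), a₂), where t ·_a s denotes the tree obtained by attaching a fresh copy of s as a new child subtree of node a in t. -/

import Mathlib

open FirstOrder Language

/-- Quantifier rank of a first-order (bounded) formula. -/
def FirstOrder.Language.BoundedFormula.qr {L : FirstOrder.Language} {α : Type*} :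
    ∀ {n : ℕ}, L.BoundedFormula α n → ℕ
  | _, .falsum => 0
  | _, .equal _ _ => 0
  | _, .rel _ _ => 0
  | _, .imp f g => max f.qr g.qr
  | _, .all f => f.qr + 1

/-- Elementary equivalence up to quantifier rank `m` (for sentences). -/
def eqQR (L : FirstOrder.Language) (m : ℕ) (M N : Type)
    (SM : L.Structure M) (SN : L.Structure N) : Prop :=
  ∀ φ : L.Sentence, φ.qr ≤ m →
    ((letI := SM; M ⊨ φ) ↔ (letI := SN; N ⊨ φ))

/-- Elementary equivalence up to quantifier rank `m` of structures expanded with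
a constant for a distinguished element. -/
def eqQR1 (L : FirstOrder.Language) (m : ℕ) (M N : Type)
    (SM : L.Structure M) (SN : L.Structure N) (e : M) (e' : N) : Prop :=
  ∀ φ : L.Formula (Fin 1), φ.qr ≤ m →
    ((letI := SM; φ.Realize (fun _ => e)) ↔ (letI := SN; φ.Realize (fun _ => e')))

/-- An unordered `Alpha`-labeled tree on the set of nodes `P`: a partial order
`le` (the ancestor-descendant order) with a minimum (the root), in which the set
of predecessors of every element is linearly ordered, with a labeling `label`. -/
structure UTreeOn (Alpha P : Type) where
  le : P → P → Prop
  partialOrder : IsPartialOrder P le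
  root : P
  root_le : ∀ x, le root x
  pred_chain : ∀ x y z, le y x → le z x → (le y z ∨ le z y)
  label : P → Alpha

/-- The signature of labeled trees over `Alpha`: a binary order symbol and a
unary predicate for each label of `Alpha`. -/
def treeLang (Alpha : Type) : FirstOrder.Language :=
  ⟨fun _ => Empty, fun n => match n with
    | 1 => Alpha
    | 2 => Unit
    | _ => Empty⟩

/-- An unordered tree as a first-order structure over `treeLang Alpha`. -/
def treeStructure {Alpha P : Type} (t : UTreeOn Alpha P) :
    (treeLang Alpha).Structure P where
  funMap := fun {_} f => Empty.elim f
  RelMap := fun {n} => match n with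
    | 0 => fun r => Empty.elim r
    | 1 => fun (a : Alpha) x => t.label (x 0) = a
    | 2 => fun _ x => t.le (x 0) (x 1)
    | (_ + 3) => fun r => Empty.elim r

/-- The ancestor-descendant order of the join `t ·_a s`: the union of the two
orders together with all pairs `(b, c)` for `b` an ancestor of `a` (including
`a`) in `t` and `c` a node of (the fresh copy of) `s`. -/
def joinLE {T S : Type} (let' : T → T → Prop) (les : S → S → Prop) (a : T) :
    T ⊕ S → T ⊕ S → Prop
  | .inl b, .inl c => let' b c
  | .inr b, .inr c => les b c
  | .inl b, .inr _ => let' b a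
  | .inr _, .inl _ => False

/-- The join `t ·_a s` as a first-order structure over `treeLang Alpha`. -/
def joinStructure {Alpha T S : Type}
    (t : UTreeOn Alpha T) (s : UTreeOn Alpha S) (a : T) :
    (treeLang Alpha).Structure (T ⊕ S) where
  funMap := fun {_} f => Empty.elim f
  RelMap := fun {n} => match n with
    | 0 => fun r => Empty.elim r
    | 1 => fun (b : Alpha) x => Sum.elim t.label s.label (x 0) = b
    | 2 => fun _ x => joinLE t.le s.le a (x 0) (x 1)
    | (_ + 3) => fun r => Empty.elim r

/-! On finite structures, agreement on all sentences of quantifier rank `m` is the same as a win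
for Duplicator in the `m`-round Ehrenfeucht–Fraïssé game: a winning position transfers every
formula of rank `≤ m`, and conversely the rank-`m` Hintikka formula of a position in a finite
structure, true in the other structure, hands Duplicator a winning answer to every move.

It therefore suffices to glue a winning strategy on `(t₁, a₁), (t₂, a₂)` and one on `s₁, s₂` into
one on the joins, answering a move in a `t`-part (an `s`-part) with the strategy for the `t`s (the
`s`s). The order between the two parts is read off from the pebble on `a`: a node `b` of `t` lies
below every node of `s` iff `b ≤ a`, and no node of `s` lies below a node of `t`. -/

namespace FirstOrder.Language

variable {L : Language}

theorem Term.eq_var [L.IsRelational] {β : Type*} : ∀ t : L.Term β, ∃ i, t = var i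
  | var i => ⟨i, rfl⟩
  | func f _ => isEmptyElim f

namespace BoundedFormula

variable {α : Type*} {n m : ℕ}

@[simp] theorem qr_not (φ : L.BoundedFormula α n) : φ.not.qr = φ.qr := by
  simp [qr]

@[simp] theorem qr_inf (φ ψ : L.BoundedFormula α n) : (φ ⊓ ψ).qr = max φ.qr ψ.qr := by
  show (φ.imp ψ.not).not.qr = _
  simp [qr]

@[simp] theorem qr_ex (φ : L.BoundedFormula α (n + 1)) : φ.ex.qr = φ.qr + 1 := by
  show φ.not.all.not.qr = _
  simp [qr]

theorem qr_foldr_inf_le {l : List (L.BoundedFormula α n)} (h : ∀ φ ∈ l, φ.qr ≤ m) :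
    (l.foldr (· ⊓ ·) ⊤).qr ≤ m := by
  induction l with
  | nil => exact Nat.zero_le m
  | cons φ l ih => simp_all

theorem qr_foldr_sup_le {l : List (L.BoundedFormula α n)} (h : ∀ φ ∈ l, φ.qr ≤ m) :
    (l.foldr (· ⊔ ·) ⊥).qr ≤ m := by
  induction l with
  | nil => exact Nat.zero_le m
  | cons φ l ih =>
    show (φ.not.imp _).qr ≤ m
    simp_all [qr]

theorem qr_iInf_le {β : Type*} [Finite β] {f : β → L.BoundedFormula α n}
    (h : ∀ b, (f b).qr ≤ m) : (iInf f).qr ≤ m :=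
  qr_foldr_inf_le (by simpa using h)

theorem qr_iSup_le {β : Type*} [Finite β] {f : β → L.BoundedFormula α n}
    (h : ∀ b, (f b).qr ≤ m) : (iSup f).qr ≤ m :=
  qr_foldr_sup_le (by simpa using h)

end BoundedFormula

end FirstOrder.Language

section Game

variable {L : Language} {M N : Type} (SM : L.Structure M) (SN : L.Structure N)

/-- Duplicator wins the `n`-round Ehrenfeucht–Fraïssé game on `M` and `N` from the position in
which the pebbles indexed by `γ` lie on `v` in `M` and on `w` in `N`; after the last round the
pebbles must span a partial isomorphism. -/
def DuplicatorWins : ℕ → {γ : Type} → (γ → M) → (γ → N) → Prop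
  | 0, _, v, w => (∀ i j, v i = v j ↔ w i = w j) ∧
      ∀ {l} (R : L.Relations l) x, SM.RelMap R (v ∘ x) ↔ SN.RelMap R (w ∘ x)
  | n + 1, _, v, w =>
      (∀ b, ∃ c, DuplicatorWins n (Sum.elim v fun _ : Unit => b) (Sum.elim w fun _ => c)) ∧
      (∀ c, ∃ b, DuplicatorWins n (Sum.elim v fun _ : Unit => b) (Sum.elim w fun _ => c))

variable {SM SN}

namespace DuplicatorWins

theorem comp : ∀ {n : ℕ} {γ δ : Type} {v : γ → M} {w : γ → N},
    DuplicatorWins SM SN n v w → ∀ f : δ → γ, DuplicatorWins SM SN n (v ∘ f) (w ∘ f)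
  | 0, _, _, _, _, ⟨heq, hrel⟩, f => ⟨fun i j => heq (f i) (f j), fun R x => hrel R (f ∘ x)⟩
  | n + 1, _, _, v, w, ⟨forth, back⟩, f => by
    have extend : ∀ {P : Type} (u : _ → P) (b : P),
        Sum.elim u (fun _ : Unit => b) ∘ Sum.map f id = Sum.elim (u ∘ f) fun _ => b :=
      fun _ _ => Sum.elim_comp_map
    refine ⟨fun b => ?_, fun c => ?_⟩
    · obtain ⟨c, h⟩ := forth b
      exact ⟨c, extend v b ▸ extend w c ▸ h.comp (Sum.map f id)⟩
    · obtain ⟨b, h⟩ := back c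
      exact ⟨b, extend v b ▸ extend w c ▸ h.comp (Sum.map f id)⟩

theorem reindex {n : ℕ} {γ δ : Type} {v : γ → M} {w : γ → N} {v' : δ → M} {w' : δ → N}
    (h : DuplicatorWins SM SN n v w) (f : δ → γ) (hv : v ∘ f = v') (hw : w ∘ f = w') :
    DuplicatorWins SM SN n v' w' :=
  hv ▸ hw ▸ h.comp f

theorem of_succ [Nonempty M] : ∀ {n : ℕ} {γ : Type} {v : γ → M} {w : γ → N},
    DuplicatorWins SM SN (n + 1) v w → DuplicatorWins SM SN n v w
  | 0, _, _, _, ⟨forth, _⟩ => by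
    obtain ⟨c, h⟩ := forth (Classical.arbitrary M)
    exact h.comp Sum.inl
  | _ + 1, _, _, _, ⟨forth, back⟩ =>
    ⟨fun b => (forth b).imp fun _ => of_succ, fun c => (back c).imp fun _ => of_succ⟩

theorem mono [Nonempty M] {n n' : ℕ} {γ : Type} {v : γ → M} {w : γ → N}
    (h : DuplicatorWins SM SN n v w) (hn : n' ≤ n) : DuplicatorWins SM SN n' v w := by
  induction hn with
  | refl => exact h
  | step _ ih => exact ih h.of_succ

theorem refl : ∀ (n : ℕ) {γ : Type} (v : γ → M), DuplicatorWins SM SM n v v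
  | 0, _, _ => ⟨fun _ _ => Iff.rfl, fun _ _ => Iff.rfl⟩
  | n + 1, _, _ => ⟨fun b => ⟨b, refl n _⟩, fun c => ⟨c, refl n _⟩⟩

end DuplicatorWins

variable {α : Type} {k n : ℕ}

theorem duplicatorWins_snoc_iff {v : α → M} {xs : Fin k → M} {w : α → N} {ys : Fin k → N}
    {b : M} {c : N} :
    DuplicatorWins SM SN n (Sum.elim v (Fin.snoc xs b)) (Sum.elim w (Fin.snoc ys c)) ↔
      DuplicatorWins SM SN n (Sum.elim (Sum.elim v xs) fun _ : Unit => b)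
        (Sum.elim (Sum.elim w ys) fun _ => c) := by
  have toSnoc : ∀ {P : Type} (u : α → P) (zs : Fin k → P) (z : P),
      Sum.elim u (Fin.snoc zs z) ∘
          Sum.elim (Sum.map id Fin.castSucc) (fun _ => Sum.inr (Fin.last k)) =
        Sum.elim (Sum.elim u zs) fun _ : Unit => z := by
    intro P u zs z
    ext ((_ | _) | _) <;> simp
  have ofSnoc : ∀ {P : Type} (u : α → P) (zs : Fin k → P) (z : P),
      Sum.elim (Sum.elim u zs) (fun _ : Unit => z) ∘
          Sum.elim (Sum.inl ∘ Sum.inl) (Fin.lastCases (Sum.inr ()) (Sum.inl ∘ Sum.inr)) =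
        Sum.elim u (Fin.snoc zs z) := by
    intro P u zs z
    ext (_ | i)
    · rfl
    · induction i using Fin.lastCases <;> simp
  exact ⟨fun h => h.reindex _ (toSnoc v xs b) (toSnoc w ys c),
    fun h => h.reindex _ (ofSnoc v xs b) (ofSnoc w ys c)⟩

theorem duplicatorWins_succ_iff_snoc {v : α → M} {xs : Fin k → M} {w : α → N}
    {ys : Fin k → N} :
    DuplicatorWins SM SN (n + 1) (Sum.elim v xs) (Sum.elim w ys) ↔
      (∀ b, ∃ c, DuplicatorWins SM SN n (Sum.elim v (Fin.snoc xs b))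
        (Sum.elim w (Fin.snoc ys c))) ∧
      (∀ c, ∃ b, DuplicatorWins SM SN n (Sum.elim v (Fin.snoc xs b))
        (Sum.elim w (Fin.snoc ys c))) := by
  simp only [duplicatorWins_snoc_iff, DuplicatorWins]

end Game

section Soundness

variable {L : Language} [L.IsRelational] {M N : Type} [SM : L.Structure M] [SN : L.Structure N]
  [Nonempty M] {α : Type} {n : ℕ}

theorem FirstOrder.Language.BoundedFormula.realize_iff_of_duplicatorWins {k : ℕ}
    (φ : L.BoundedFormula α k) (hφ : φ.qr ≤ n) {v : α → M} {xs : Fin k → M} {w : α → N}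
    {ys : Fin k → N} (h : DuplicatorWins SM SN n (Sum.elim v xs) (Sum.elim w ys)) :
    φ.Realize v xs ↔ φ.Realize w ys := by
  induction φ generalizing n with
  | falsum => exact Iff.rfl
  | equal t₁ t₂ =>
    obtain ⟨i, rfl⟩ := t₁.eq_var
    obtain ⟨j, rfl⟩ := t₂.eq_var
    exact (h.mono (Nat.zero_le n)).1 i j
  | rel R ts =>
    choose x hx using fun o => (ts o).eq_var
    obtain rfl : ts = fun o => Term.var (x o) := funext hx
    exact (h.mono (Nat.zero_le n)).2 R x
  | imp φ ψ ihφ ihψ =>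
    simp only [qr, max_le_iff] at hφ
    simp only [realize_imp, ihφ hφ.1 h, ihψ hφ.2 h]
  | all φ ih =>
    obtain ⟨forth, back⟩ := duplicatorWins_succ_iff_snoc.1 (h.mono hφ)
    simp only [realize_all]
    refine ⟨fun hv c => ?_, fun hw b => ?_⟩
    · obtain ⟨b, hbc⟩ := back c
      exact (ih le_rfl hbc).1 (hv b)
    · obtain ⟨c, hbc⟩ := forth b
      exact (ih le_rfl hbc).2 (hw c)

theorem FirstOrder.Language.Formula.realize_iff_of_duplicatorWins (φ : L.Formula α)
    (hφ : φ.qr ≤ n) {v : α → M} {w : α → N} (h : DuplicatorWins SM SN n v w) :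
    φ.Realize v ↔ φ.Realize w :=
  BoundedFormula.realize_iff_of_duplicatorWins φ hφ <|
    h.reindex (Sum.elim id finZeroElim) (by ext (_ | i); rfl; exact i.elim0)
      (by ext (_ | i); rfl; exact i.elim0)

end Soundness

section Hintikka

open BoundedFormula

variable {L : Language} {M N : Type} [SM : L.Structure M] [SN : L.Structure N] {α : Type}
  {k n : ℕ}

noncomputable def signedFormula (P : Prop) (φ : L.BoundedFormula α k) : L.BoundedFormula α k :=
  open Classical in if P then φ else φ.not

omit SM in
theorem realize_signedFormula {P : Prop} {φ : L.BoundedFormula α k} {v : α → N}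
    {xs : Fin k → N} : (signedFormula P φ).Realize v xs ↔ (φ.Realize v xs ↔ P) := by
  by_cases hP : P <;> simp [signedFormula, hP]

theorem qr_signedFormula (P : Prop) (φ : L.BoundedFormula α k) :
    (signedFormula P φ).qr = φ.qr := by
  by_cases hP : P <;> simp [signedFormula, hP]

def varAtom :
    ((α ⊕ Fin k) × (α ⊕ Fin k)) ⊕ (Σ R : Σ l, L.Relations l, Fin R.1 → α ⊕ Fin k) →
      L.BoundedFormula α k
  | .inl (i, j) => (Term.var i).bdEqual (Term.var j)
  | .inr ⟨⟨_, R⟩, x⟩ => R.boundedFormula fun o => Term.var (x o)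

theorem qr_varAtom (a : _) : (varAtom (L := L) (α := α) (k := k) a).qr = 0 := by
  rcases a with _ | _ <;> rfl

theorem forall_realize_varAtom_iff {v : α → M} {xs : Fin k → M} {w : α → N} {ys : Fin k → N} :
    (∀ a, (varAtom (L := L) a).Realize v xs ↔ (varAtom a).Realize w ys) ↔
      DuplicatorWins SM SN 0 (Sum.elim v xs) (Sum.elim w ys) :=
  ⟨fun h => ⟨fun i j => h (.inl (i, j)), fun R x => h (.inr ⟨⟨_, R⟩, x⟩)⟩,
    fun ⟨heq, hrel⟩ => by
      rintro (⟨i, j⟩ | ⟨⟨_, R⟩, x⟩)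
      exacts [heq i j, hrel R x]⟩

variable [Finite (Σ l, L.Relations l)] [Finite M] [Finite α]

noncomputable def hintikka (v : α → M) : (n k : ℕ) → (Fin k → M) → L.BoundedFormula α k
  | 0, _, xs => iInf fun a => signedFormula ((varAtom a).Realize v xs) (varAtom a)
  | n + 1, k, xs =>
      (iInf fun b => (hintikka v n (k + 1) (Fin.snoc xs b)).ex) ⊓
        (iSup fun b => hintikka v n (k + 1) (Fin.snoc xs b)).all

theorem qr_hintikka_le (v : α → M) :
    ∀ (n k : ℕ) (xs : Fin k → M), (hintikka (L := L) v n k xs).qr ≤ n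
  | 0, _, _ => qr_iInf_le fun a => (qr_signedFormula _ _).trans_le (qr_varAtom a).le
  | n + 1, k, xs => by
    simp only [hintikka, qr_inf, max_le_iff]
    exact ⟨qr_iInf_le fun b => by simpa using qr_hintikka_le v n (k + 1) _,
      Nat.succ_le_succ (qr_iSup_le fun b => qr_hintikka_le v n (k + 1) _)⟩

theorem realize_hintikka_iff {v : α → M} {w : α → N} :
    ∀ {n k : ℕ} {xs : Fin k → M} {ys : Fin k → N},
      (hintikka (L := L) v n k xs).Realize w ys ↔
        DuplicatorWins SM SN n (Sum.elim v xs) (Sum.elim w ys)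
  | 0, _, _, _ => by
    simp only [hintikka, realize_iInf, realize_signedFormula]
    exact forall_congr' (fun _ => Iff.comm) |>.trans forall_realize_varAtom_iff
  | n + 1, k, xs, ys => by
    simp only [hintikka, realize_inf, realize_iInf, realize_ex, realize_all, realize_iSup,
      realize_hintikka_iff, duplicatorWins_succ_iff_snoc]

theorem duplicatorWins_of_forall_realize_iff {v : α → M} {w : α → N}
    (h : ∀ φ : L.Formula α, φ.qr ≤ n → (φ.Realize v ↔ φ.Realize w)) :
    DuplicatorWins SM SN n v w :=
  have hv := realize_hintikka_iff.2 (DuplicatorWins.refl n (Sum.elim v default))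
  (realize_hintikka_iff.1 ((h _ (qr_hintikka_le v n 0 default)).1 hv)).comp Sum.inl

end Hintikka

instance {Alpha : Type} : (treeLang Alpha).IsRelational :=
  fun _ => inferInstanceAs (IsEmpty Empty)

instance {Alpha : Type} [Finite Alpha] : Finite (Σ l, (treeLang Alpha).Relations l) :=
  Finite.of_surjective (Sum.elim (fun a : Alpha => ⟨1, a⟩) fun u : Unit => ⟨2, u⟩) <| by
    rintro ⟨_ | _ | _ | _, R⟩
    exacts [R.elim, ⟨.inl R, rfl⟩, ⟨.inr R, rfl⟩, R.elim]

section Reindex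

variable {L : Language} {T₁ T₂ S₁ S₂ : Type} {SM : L.Structure (T₁ ⊕ S₁)}
  {SN : L.Structure (T₂ ⊕ S₂)} {n : ℕ} {γT γS : Type} {vT : γT → T₁} {wT : γT → T₂}
  {vS : γS → S₁} {wS : γS → S₂}

theorem DuplicatorWins.extend_inl_of_sumMap {b : T₁} {c : T₂}
    (h : DuplicatorWins SM SN n (Sum.map (Sum.elim vT fun _ : Unit => b) vS)
      (Sum.map (Sum.elim wT fun _ : Unit => c) wS)) :
    DuplicatorWins SM SN n (Sum.elim (Sum.map vT vS) fun _ : Unit => .inl b)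
      (Sum.elim (Sum.map wT wS) fun _ => .inl c) :=
  h.reindex (Sum.elim (Sum.map .inl id) fun _ => .inl (.inr ()))
    (by ext ((_ | _) | _) <;> rfl) (by ext ((_ | _) | _) <;> rfl)

theorem DuplicatorWins.extend_inr_of_sumMap {b : S₁} {c : S₂}
    (h : DuplicatorWins SM SN n (Sum.map vT (Sum.elim vS fun _ : Unit => b))
      (Sum.map wT (Sum.elim wS fun _ : Unit => c))) :
    DuplicatorWins SM SN n (Sum.elim (Sum.map vT vS) fun _ : Unit => .inr b)
      (Sum.elim (Sum.map wT wS) fun _ => .inr c) :=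
  h.reindex (Sum.elim (Sum.map id .inl) fun _ => .inr (.inr ()))
    (by ext ((_ | _) | _) <;> rfl) (by ext ((_ | _) | _) <;> rfl)

end Reindex

theorem duplicatorWins_join {Alpha T₁ T₂ S₁ S₂ : Type} (t₁ : UTreeOn Alpha T₁)
    (t₂ : UTreeOn Alpha T₂) (s₁ : UTreeOn Alpha S₁) (s₂ : UTreeOn Alpha S₂) :
    ∀ (n : ℕ) {γT γS : Type} {vT : γT → T₁} {wT : γT → T₂} {vS : γS → S₁} {wS : γS → S₂}
      (i₀ : γT),
      DuplicatorWins (treeStructure t₁) (treeStructure t₂) n vT wT →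
      DuplicatorWins (treeStructure s₁) (treeStructure s₂) n vS wS →
      DuplicatorWins (joinStructure t₁ s₁ (vT i₀)) (joinStructure t₂ s₂ (wT i₀)) n
        (Sum.map vT vS) (Sum.map wT wS)
  | 0, _, _, vT, wT, vS, wS, i₀, ⟨heqT, hrelT⟩, ⟨heqS, hrelS⟩ => by
    refine ⟨?_, fun {l} R x => ?_⟩
    · rintro (i | i) (j | j) <;> simp [heqT, heqS]
    · match l, R, x with
      | 1, a, x =>
        show Sum.elim t₁.label s₁.label (Sum.map vT vS (x 0)) = a ↔
          Sum.elim t₂.label s₂.label (Sum.map wT wS (x 0)) = a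
        rcases x 0 with i | i
        exacts [hrelT a fun _ => i, hrelS a fun _ => i]
      | 2, R, x =>
        show joinLE t₁.le s₁.le (vT i₀) (Sum.map vT vS (x 0)) (Sum.map vT vS (x 1)) ↔
          joinLE t₂.le s₂.le (wT i₀) (Sum.map wT wS (x 0)) (Sum.map wT wS (x 1))
        rcases x 0 with i | i <;> rcases x 1 with j | j
        exacts [hrelT R ![i, j], hrelT R ![i, i₀], Iff.rfl, hrelS R ![i, j] ]
  | n + 1, _, _, vT, wT, vS, wS, i₀, hT, hS => by
    have : Nonempty T₁ := ⟨t₁.root⟩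
    have : Nonempty S₁ := ⟨s₁.root⟩
    refine ⟨?_, ?_⟩
    · rintro (b | b)
      · obtain ⟨c, h⟩ := hT.1 b
        exact ⟨.inl c, duplicatorWins_join t₁ t₂ s₁ s₂ n (Sum.inl i₀) h hS.of_succ
          |>.extend_inl_of_sumMap⟩
      · obtain ⟨c, h⟩ := hS.1 b
        exact ⟨.inr c, duplicatorWins_join t₁ t₂ s₁ s₂ n i₀ hT.of_succ h
          |>.extend_inr_of_sumMap⟩
    · rintro (c | c)
      · obtain ⟨b, h⟩ := hT.2 c
        exact ⟨.inl b, duplicatorWins_join t₁ t₂ s₁ s₂ n (Sum.inl i₀) h hS.of_succ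
          |>.extend_inl_of_sumMap⟩
      · obtain ⟨b, h⟩ := hS.2 c
        exact ⟨.inr b, duplicatorWins_join t₁ t₂ s₁ s₂ n i₀ hT.of_succ h
          |>.extend_inr_of_sumMap⟩

theorem join_preserves_qr_equivalence_general (Alpha : Type) [Fintype Alpha] (m : ℕ)
    (T₁ T₂ S₁ S₂ : Type) [Fintype T₁] [Fintype S₁]
    (t₁ : UTreeOn Alpha T₁) (t₂ : UTreeOn Alpha T₂)
    (s₁ : UTreeOn Alpha S₁) (s₂ : UTreeOn Alpha S₂)
    (a₁ : T₁) (a₂ : T₂)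
    (ht : eqQR1 (treeLang Alpha) m T₁ T₂
      (treeStructure t₁) (treeStructure t₂) a₁ a₂)
    (hs : eqQR (treeLang Alpha) m S₁ S₂ (treeStructure s₁) (treeStructure s₂)) :
    eqQR1 (treeLang Alpha) m (T₁ ⊕ S₁) (T₂ ⊕ S₂)
      (joinStructure t₁ s₁ a₁) (joinStructure t₂ s₂ a₂)
      (Sum.inl a₁) (Sum.inl a₂) := by
  have : Nonempty T₁ := ⟨t₁.root⟩
  have hT := duplicatorWins_of_forall_realize_iff (SM := treeStructure t₁)
    (SN := treeStructure t₂) ht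
  have hS := duplicatorWins_of_forall_realize_iff (SM := treeStructure s₁)
    (SN := treeStructure s₂) (v := default) (w := default) hs
  intro φ hφ
  exact Formula.realize_iff_of_duplicatorWins (SM := joinStructure t₁ s₁ a₁)
    (SN := joinStructure t₂ s₂ a₂) φ hφ
    ((duplicatorWins_join t₁ t₂ s₁ s₂ m 0 hT hS).comp Sum.inl)

/-- Composition lemma for unordered trees: if `(t₁, a₁) ≡_m (t₂, a₂)` and
`s₁ ≡_m s₂`, then `((t₁ ·_{a₁} s₁), a₁) ≡_m ((t₂ ·_{a₂} s₂), a₂)`. -/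
theorem join_preserves_qr_equivalence (Alpha : Type) [Fintype Alpha] (m : ℕ)
    (T₁ T₂ S₁ S₂ : Type) [Fintype T₁] [Fintype T₂] [Fintype S₁] [Fintype S₂]
    (t₁ : UTreeOn Alpha T₁) (t₂ : UTreeOn Alpha T₂)
    (s₁ : UTreeOn Alpha S₁) (s₂ : UTreeOn Alpha S₂)
    (a₁ : T₁) (a₂ : T₂)
    (ht : eqQR1 (treeLang Alpha) m T₁ T₂
      (treeStructure t₁) (treeStructure t₂) a₁ a₂)
    (hs : eqQR (treeLang Alpha) m S₁ S₂ (treeStructure s₁) (treeStructure s₂)) :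
    eqQR1 (treeLang Alpha) m (T₁ ⊕ S₁) (T₂ ⊕ S₂)
      (joinStructure t₁ s₁ a₁) (joinStructure t₂ s₂ a₂)
      (Sum.inl a₁) (Sum.inl a₂) :=
  join_preserves_qr_equivalence_general Alpha m T₁ T₂ S₁ S₂ t₁ t₂ s₁ s₂ a₁ a₂ ht hs
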